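/- Let (W_n)_{n≥0} be a sequence in ℓ²(ℤ^d; H) with ‖W_0‖ = 1 evolving by W_{n+1}(x) = ∑_{ε ∈ Λ^d} C_n^{(ε)} W_n(x − ε) (the d-dimensional QBN walk), and let (ω^{(n)})_{n≥0} satisfy ω^{(n+1)} = 𝔍_n^{(d)} ω^{(n)} (the nucleus sequence of the d-dimensional open QBN walk). If ω^{(0)}(x) = |W_0(x)⟩⟨W_0(x)| for all x ∈ ℤ^d, then for every n ≥ 0 and every x ∈ ℤ^d one has Tr[ω^{(n)}(x)] = ‖W_n(x)‖²; that is, the two walks have identical probability distributions at every time. -/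

import Mathlib

/- Common setup: quantum Bernoulli noises on `ℋ = ℓ²(Γ)`, `Γ` = finite subsets of `ℕ`. -/

noncomputable section

open ContinuousLinearMap Filter

/-- The space `ℋ = ℓ²(Γ)` of square-integrable Bernoulli functionals,
where `Γ` is the set of finite subsets of `ℕ`. -/
abbrev ℋ : Type := lp (fun _ : Finset ℕ => ℂ) 2

/-- The canonical orthonormal basis `{Z_σ : σ ∈ Γ}` of `ℋ`. -/
def Z (σ : Finset ℕ) : ℋ := lp.single 2 σ 1

/-- `QBN a` says that `a k` is the annihilation operator `∂_k` acting on Bernoulli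
functionals: `∂_k Z_σ = 1_σ(k) Z_{σ\k}` and `∂_k* Z_σ = (1 - 1_σ(k)) Z_{σ∪k}`. -/
def QBN (a : ℕ → ℋ →L[ℂ] ℋ) : Prop :=
  (∀ (k : ℕ) (σ : Finset ℕ), a k (Z σ) = if k ∈ σ then Z (σ.erase k) else 0) ∧
  (∀ (k : ℕ) (σ : Finset ℕ), adjoint (a k) (Z σ) = if k ∈ σ then 0 else Z (insert k σ))

/-- `L_n = (∂_n* + ∂_n - I)/2`. -/
def Lop (a : ℕ → ℋ →L[ℂ] ℋ) (n : ℕ) : ℋ →L[ℂ] ℋ := (2 : ℂ)⁻¹ • (adjoint (a n) + a n - 1)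

/-- `R_n = (∂_n* + ∂_n + I)/2`. -/
def Rop (a : ℕ → ℋ →L[ℂ] ℋ) (n : ℕ) : ℋ →L[ℂ] ℋ := (2 : ℂ)⁻¹ • (adjoint (a n) + a n + 1)

/-- `Λ = {-1, 1} ⊆ ℤ`. -/
def Lam : Finset ℤ := {-1, 1}

/-- `Λ^d`, as a finite set of vectors in `ℤ^d`. -/
def LamD (d : ℕ) : Finset (Fin d → ℤ) := Fintype.piFinset fun _ => Lam

/-- `B_n^{(ε)}`: equals `L_n` if `ε = -1` and `R_n` if `ε = +1`. -/
def Bop (a : ℕ → ℋ →L[ℂ] ℋ) (n : ℕ) (e : ℤ) : ℋ →L[ℂ] ℋ :=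
  if e = -1 then Lop a n else Rop a n

/-- A characterization of the `d`-fold Hilbert-space tensor power of `Hs`:
`tpv` is the multilinear map `(u_1, …, u_d) ↦ u_1 ⊗ ⋯ ⊗ u_d`, which satisfies
`⟪⊗u_j, ⊗v_j⟫ = ∏ ⟪u_j, v_j⟫` and has dense span, and `tp` sends a `d`-tuple of bounded
operators to their tensor product operator, i.e. `(⊗A_j)(⊗u_j) = ⊗(A_j u_j)`. -/
def IsTensorD {Hs : Type} [NormedAddCommGroup Hs] [InnerProductSpace ℂ Hs]
    {d : ℕ} {Hd : Type} [NormedAddCommGroup Hd] [InnerProductSpace ℂ Hd]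
    (tpv : MultilinearMap ℂ (fun _ : Fin d => Hs) Hd)
    (tp : (Fin d → Hs →L[ℂ] Hs) → (Hd →L[ℂ] Hd)) : Prop :=
  (∀ u v : Fin d → Hs, (@inner ℂ _ _ (tpv u) (tpv v)) = ∏ j, (@inner ℂ _ _ (u j) (v j))) ∧
  ((Submodule.span ℂ (Set.range fun u => tpv u)).topologicalClosure = ⊤) ∧
  (∀ (A : Fin d → Hs →L[ℂ] Hs) (u : Fin d → Hs), tp A (tpv u) = tpv fun j => A j (u j))

/-- Conjugation of an operator by a unitary isomorphism `K`: `T ↦ K T K⁻¹`. -/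
def conjK {Hs Hd : Type} [NormedAddCommGroup Hs] [InnerProductSpace ℂ Hs]
    [NormedAddCommGroup Hd] [InnerProductSpace ℂ Hd]
    (K : Hd ≃ₗᵢ[ℂ] Hs) (T : Hd →L[ℂ] Hd) : Hs →L[ℂ] Hs :=
  K.toLinearIsometry.toContinuousLinearMap ∘L T ∘L K.symm.toLinearIsometry.toContinuousLinearMap

/-- `C_n^{(ε)} = K (B_n^{(ε_1)} ⊗ ⋯ ⊗ B_n^{(ε_d)}) K⁻¹` for `ε ∈ Λ^d`. -/
def Cop {d : ℕ} {Hd : Type} [NormedAddCommGroup Hd] [InnerProductSpace ℂ Hd]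
    (a : ℕ → ℋ →L[ℂ] ℋ) (tp : (Fin d → ℋ →L[ℂ] ℋ) → (Hd →L[ℂ] Hd))
    (K : Hd ≃ₗᵢ[ℂ] ℋ) (n : ℕ) (v : Fin d → ℤ) : ℋ →L[ℂ] ℋ :=
  conjK K (tp fun j => Bop a n (v j))

/-- The trace of an operator computed relative to an orthonormal basis `b`:
`Tr T = ∑_i Re ⟪b i, T (b i)⟫` (for positive operators this is the genuine trace). -/
def trB {E : Type} [NormedAddCommGroup E] [InnerProductSpace ℂ E] {ι : Type}
    (b : ι → E) (T : E →L[ℂ] E) : ℝ :=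
  ∑' i, (@inner ℂ _ _ (b i) (T (b i))).re

/-- Finiteness (summability) of the trace of `T` relative to the orthonormal basis `b`;
for a positive operator `T` this says exactly that `T` is of trace class. -/
def HasFiniteTrace {E : Type} [NormedAddCommGroup E] [InnerProductSpace ℂ E] {ι : Type}
    (b : ι → E) (T : E →L[ℂ] E) : Prop :=
  Summable fun i => (@inner ℂ _ _ (b i) (T (b i))).re

/-- The trace on `ℋ`, computed in the canonical ONB `{Z_σ}`. -/
def trH : (ℋ →L[ℂ] ℋ) → ℝ := trB Z

/-- A nucleus with site space `X` on a Hilbert space with orthonormal basis `b`: a family of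
positive trace-class operators `ω x` with `∑_x Tr[ω x] = 1`. -/
def IsNucleusOn {E : Type} [NormedAddCommGroup E] [InnerProductSpace ℂ E] [CompleteSpace E]
    {ι X : Type} (b : ι → E) (ω : X → E →L[ℂ] E) : Prop :=
  (∀ x, (ω x).IsPositive) ∧ (∀ x, HasFiniteTrace b (ω x)) ∧ HasSum (fun x => trB b (ω x)) 1

/-- The one-dimensional map `𝔍_n`: `(𝔍_n ρ)(x) = L_n ρ(x+1) L_n + R_n ρ(x-1) R_n`. -/
def Jmap1 (a : ℕ → ℋ →L[ℂ] ℋ) (n : ℕ) (ρ : ℤ → ℋ →L[ℂ] ℋ) : ℤ → ℋ →L[ℂ] ℋ :=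
  fun x => Lop a n * ρ (x + 1) * Lop a n + Rop a n * ρ (x - 1) * Rop a n

/-- The `d`-dimensional map `𝔍_n^{(d)}`:
`(𝔍_n^{(d)} ω)(x) = ∑_{ε ∈ Λ^d} C_n^{(ε)} ω(x-ε) C_n^{(ε)}`. -/
def JmapD {d : ℕ} {Hd : Type} [NormedAddCommGroup Hd] [InnerProductSpace ℂ Hd]
    (a : ℕ → ℋ →L[ℂ] ℋ) (tp : (Fin d → ℋ →L[ℂ] ℋ) → (Hd →L[ℂ] Hd)) (K : Hd ≃ₗᵢ[ℂ] ℋ)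
    (n : ℕ) (ω : (Fin d → ℤ) → ℋ →L[ℂ] ℋ) : (Fin d → ℤ) → ℋ →L[ℂ] ℋ :=
  fun x => ∑ v ∈ LamD d, Cop a tp K n v * ω (x - v) * Cop a tp K n v

/-- The sequence `ρ⁽⁰⁾ = ρ`, `ρ⁽ⁿ⁺¹⁾ = 𝔍_n ρ⁽ⁿ⁾` generated by `ρ` and `(𝔍_n)`. -/
def seqJ (a : ℕ → ℋ →L[ℂ] ℋ) (ρ : ℤ → ℋ →L[ℂ] ℋ) : ℕ → ℤ → ℋ →L[ℂ] ℋ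
  | 0 => ρ
  | n + 1 => Jmap1 a n (seqJ a ρ n)

/-- Regularity of a 1-dimensional nucleus `ρ`:
`lim_n ∑_x e^{itx/√n} Tr[ρ⁽ⁿ⁾(x)] = e^{-t²/2}` for every real `t`. -/
def Regular (a : ℕ → ℋ →L[ℂ] ℋ) (ρ : ℤ → ℋ →L[ℂ] ℋ) : Prop :=
  ∀ t : ℝ, Tendsto (fun n : ℕ => ∑' x : ℤ,
      Complex.exp (Complex.I * (t : ℂ) * (x : ℂ) / (Real.sqrt n : ℂ)) * (trH (seqJ a ρ n x) : ℂ))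
    atTop (nhds (Complex.exp (-(t : ℂ) ^ 2 / 2)))

/-- The rank-one (Dirac) operator `|u⟩⟨v| : w ↦ ⟪v, w⟫ u`. -/
def dyad {E : Type} [NormedAddCommGroup E] [InnerProductSpace ℂ E] (u v : E) : E →L[ℂ] E :=
  (toSpanSingleton ℂ u).comp (innerSL ℂ v)

/-- `ℓ²(ℤ^d)`. -/
abbrev l2Z (d : ℕ) : Type := lp (fun _ : Fin d → ℤ => ℂ) 2

/-- The canonical orthonormal basis `{δ_x : x ∈ ℤ^d}` of `ℓ²(ℤ^d)`. -/
def deltaV {d : ℕ} (x : Fin d → ℤ) : l2Z d := lp.single 2 x 1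

/-- A characterization of the Hilbert-space tensor product `E = ℓ²(ℤ^d) ⊗ Hs`:
`tv` is the bilinear map `(f, u) ↦ f ⊗ u`, with `⟪f⊗u, g⊗v⟫ = ⟪f,g⟫⟪u,v⟫` and dense span,
and `top2` sends a pair of bounded operators to their tensor product operator:
`(A ⊗ B)(f ⊗ u) = (A f) ⊗ (B u)`. -/
def IsTensor2 {d : ℕ} {Hs E : Type} [NormedAddCommGroup Hs] [InnerProductSpace ℂ Hs]
    [NormedAddCommGroup E] [InnerProductSpace ℂ E]
    (tv : l2Z d →ₗ[ℂ] Hs →ₗ[ℂ] E)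
    (top2 : (l2Z d →L[ℂ] l2Z d) → (Hs →L[ℂ] Hs) → (E →L[ℂ] E)) : Prop :=
  (∀ (f g : l2Z d) (u v : Hs),
      (@inner ℂ _ _ (tv f u) (tv g v)) = (@inner ℂ _ _ f g) * (@inner ℂ _ _ u v)) ∧
  ((Submodule.span ℂ {z : E | ∃ f u, z = tv f u}).topologicalClosure = ⊤) ∧
  (∀ (A : l2Z d →L[ℂ] l2Z d) (B : Hs →L[ℂ] Hs) (f : l2Z d) (u : Hs),
      top2 A B (tv f u) = tv (A f) (B u))

/-- The orthonormal basis `{δ_x ⊗ b_κ}` of the tensor product `ℓ²(ℤ^d) ⊗ Hs` induced by the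
canonical basis of `ℓ²(ℤ^d)` and an orthonormal basis `b` of `Hs`. -/
def tbasis {d : ℕ} {Hs E : Type} [NormedAddCommGroup Hs] [InnerProductSpace ℂ Hs]
    [NormedAddCommGroup E] [InnerProductSpace ℂ E]
    (tv : l2Z d →ₗ[ℂ] Hs →ₗ[ℂ] E) {κ : Type} (b : κ → Hs) : (Fin d → ℤ) × κ → E :=
  fun p => tv (deltaV p.1) (b p.2)

/-- The Kraus operators `M^{(n)}_{x,y} = |δ_x⟩⟨δ_y| ⊗ C_n^{(x-y)}` if `x - y ∈ Λ^d`, else `0`. -/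
def Mop {d : ℕ} {Hd E : Type} [NormedAddCommGroup Hd] [InnerProductSpace ℂ Hd]
    [NormedAddCommGroup E] [InnerProductSpace ℂ E]
    (a : ℕ → ℋ →L[ℂ] ℋ) (tp : (Fin d → ℋ →L[ℂ] ℋ) → (Hd →L[ℂ] Hd)) (K : Hd ≃ₗᵢ[ℂ] ℋ)
    (top2 : (l2Z d →L[ℂ] l2Z d) → (ℋ →L[ℂ] ℋ) → (E →L[ℂ] E))
    (n : ℕ) (x y : Fin d → ℤ) : E →L[ℂ] E :=
  if x - y ∈ LamD d then top2 (dyad (deltaV x) (deltaV y)) (Cop a tp K n (x - y)) else 0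

/-- The 1-dimensional nucleus `ρ_σ` concentrated at `0` with value `|Z_σ⟩⟨Z_σ|`. -/
def rhoPoint (σ : Finset ℕ) : ℤ → ℋ →L[ℂ] ℋ := fun x => if x = 0 then dyad (Z σ) (Z σ) else 0

/-- `ℓ²(ℤ^d; ℋ)`, the space of square-summable `ℋ`-valued functions on `ℤ^d`. -/
abbrev l2ZH (d : ℕ) : Type := lp (fun _ : Fin d → ℤ => ℋ) 2

/-!
Write `S_n = ∂_n* + ∂_n`. As `S_n Z_σ = Z_{σ ∆ {n}}`, the `S_n` are commuting self-adjoint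
involutions, so `L_n = (S_n - 1)/2` and `R_n = (S_n + 1)/2` are commuting self-adjoint operators
with `L_n R_n = 0`. Hence the coins `C_n^{(ε)}` all commute, are self-adjoint, and satisfy
`C_n^{(ε)} C_n^{(ε')} = 0` for `ε ≠ ε'`.

Unfolding both evolutions along paths of the walk, `ω⁽ⁿ⁾(x) = ∑_p |ξ_p(x)⟩⟨ξ_p(x)|` and
`W_n(x) = ∑_p ξ_p(x)`. Two distinct paths take different steps `ε ≠ ε'` at some time `m`, and
commuting the coins produces the factor `C_m^{(ε)} C_m^{(ε')} = 0` in `⟪ξ_p(x), ξ_q(x)⟫`. So the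
`ξ_p(x)` are orthogonal and `Tr ω⁽ⁿ⁾(x) = ∑_p ‖ξ_p(x)‖² = ‖W_n(x)‖²`. For the induction on `n`,
orthogonality is carried in the stronger form `⟪ξ_p(x), T ξ_q(x)⟫ = 0` for every `T` in the
algebra generated by the coins, which is stable under `T ↦ C T C`.
-/

open InnerProductSpace
open scoped symmDiff

local notation "⟪" x ", " y "⟫" => @inner ℂ _ _ x y

section Hilbert

variable {E : Type} [NormedAddCommGroup E] [InnerProductSpace ℂ E]

lemma dyad_eq_rankOne (u v : E) : dyad u v = rankOne ℂ u v := rfl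

lemma norm_sum_sq_eq_sum_norm_sq {κ : Type} [Fintype κ] {ξ : κ → E}
    (h : Pairwise fun i j => ⟪ξ i, ξ j⟫ = 0) : ‖∑ k, ξ k‖ ^ 2 = ∑ k, ‖ξ k‖ ^ 2 := by
  have hinner : ⟪∑ k, ξ k, ∑ k, ξ k⟫ = ∑ k, ⟪ξ k, ξ k⟫ := by
    simp only [sum_inner, inner_sum]
    exact Finset.sum_congr rfl fun i _ =>
      Finset.sum_eq_single i (fun j _ hji => h hji) (by simp)
  calc ‖∑ k, ξ k‖ ^ 2 = RCLike.re ⟪∑ k, ξ k, ∑ k, ξ k⟫ := (inner_self_eq_norm_sq _).symm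
    _ = ∑ k, ‖ξ k‖ ^ 2 := by simp only [hinner, map_sum, inner_self_eq_norm_sq]

lemma HilbertBasis.hasSum_re_inner_dyad {ι : Type} (b : HilbertBasis ι ℂ E) (u : E) :
    HasSum (fun i => ⟪b i, dyad u u (b i)⟫.re) (‖u‖ ^ 2) := by
  have h := (b.hasSum_inner_mul_inner u u).mapL Complex.reCLM
  simp only [Complex.reCLM_apply, inner_self_eq_norm_sq_to_K] at h
  convert h using 2 with i
  · rw [dyad_eq_rankOne, rankOne_apply, inner_smul_right, mul_comm]
  · norm_cast

lemma HilbertBasis.trB_sum_dyad {ι κ : Type} [Fintype κ] (b : HilbertBasis ι ℂ E) (ξ : κ → E) :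
    trB b (∑ k, dyad (ξ k) (ξ k)) = ∑ k, ‖ξ k‖ ^ 2 := by
  refine HasSum.tsum_eq ?_
  convert hasSum_sum fun k _ => b.hasSum_re_inner_dyad (ξ k) with i
  simp only [FunLike.coe_sum, Finset.sum_apply, inner_sum, Complex.re_sum]

variable [CompleteSpace E]

lemma IsSelfAdjoint.mul_dyad_mul {T : E →L[ℂ] E} (hT : IsSelfAdjoint T) (u : E) :
    T * dyad u u * T = dyad (T u) (T u) := by
  simp only [dyad_eq_rankOne, ContinuousLinearMap.mul_def, comp_rankOne, rankOne_comp,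
    hT.adjoint_eq]

end Hilbert

section Decomposition

variable {E : Type} [NormedAddCommGroup E] [InnerProductSpace ℂ E] {X : Type}

structure IsOrthogonalDecomposition (𝒜 : Subalgebra ℂ (E →L[ℂ] E)) (w : X → E)
    (ρ : X → E →L[ℂ] E) {ι : Type} [Fintype ι] (ξ : ι → X → E) : Prop where
  eq_sum_dyad : ∀ x, ρ x = ∑ i, dyad (ξ i x) (ξ i x)
  eq_sum : ∀ x, w x = ∑ i, ξ i x
  inner_eq_zero : ∀ x, Pairwise fun i j => ∀ T ∈ 𝒜, ⟪ξ i x, T (ξ j x)⟫ = 0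

variable {𝒜 : Subalgebra ℂ (E →L[ℂ] E)}

lemma isOrthogonalDecomposition_dyad (w : X → E) :
    IsOrthogonalDecomposition 𝒜 w (fun x => dyad (w x) (w x)) fun (_ : Unit) => w where
  eq_sum_dyad x := by rw [Fintype.sum_unique]
  eq_sum x := by rw [Fintype.sum_unique]
  inner_eq_zero _ i j hij := absurd (Subsingleton.elim i j) hij

namespace IsOrthogonalDecomposition

variable {w : X → E} {ρ : X → E →L[ℂ] E} {ι : Type} [Fintype ι] {ξ : ι → X → E}

lemma trB_eq {κ : Type} (h : IsOrthogonalDecomposition 𝒜 w ρ ξ) (b : HilbertBasis κ ℂ E)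
    (x : X) : trB b (ρ x) = ‖w x‖ ^ 2 := by
  rw [h.eq_sum_dyad, h.eq_sum, b.trB_sum_dyad, norm_sum_sq_eq_sum_norm_sq]
  intro i j hij
  simpa using h.inner_eq_zero x hij 1 (one_mem 𝒜)

variable [CompleteSpace E] [AddGroup X]

lemma step (h : IsOrthogonalDecomposition 𝒜 w ρ ξ) {S : Finset X} {c : X → E →L[ℂ] E}
    (hsa : ∀ v, IsSelfAdjoint (c v)) (hmem : ∀ v, c v ∈ 𝒜)
    (hcomm : ∀ v, ∀ T ∈ 𝒜, Commute (c v) T)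
    (horth : ∀ v ∈ S, ∀ v' ∈ S, v ≠ v' → c v * c v' = 0) :
    IsOrthogonalDecomposition 𝒜 (fun x => ∑ v ∈ S, c v (w (x - v)))
      (fun x => ∑ v ∈ S, c v * ρ (x - v) * c v)
      (fun (p : S × ι) x => c p.1 (ξ p.2 (x - p.1))) where
  eq_sum_dyad x := by
    rw [Fintype.sum_prod_type,
      Finset.sum_coe_sort S fun v => ∑ i, dyad (c v (ξ i (x - v))) (c v (ξ i (x - v)))]
    refine Finset.sum_congr rfl fun v _ => ?_
    simp only [h.eq_sum_dyad, Finset.mul_sum, Finset.sum_mul, (hsa v).mul_dyad_mul]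
  eq_sum x := by
    rw [Fintype.sum_prod_type, Finset.sum_coe_sort S fun v => ∑ i, c v (ξ i (x - v))]
    simp only [h.eq_sum, map_sum]
  inner_eq_zero x := by
    rintro ⟨⟨v, hv⟩, i⟩ ⟨⟨v', hv'⟩, j⟩ hne T hT
    dsimp only
    have hsymm : ⟪c v (ξ i (x - v)), T (c v' (ξ j (x - v')))⟫ =
        ⟪ξ i (x - v), (c v * T * c v') (ξ j (x - v'))⟫ :=
      (hsa v).isSymmetric _ _
    by_cases hvv : v = v'
    · subst hvv
      have hij : i ≠ j := fun hij => hne (by rw [hij])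
      rw [hsymm]
      exact h.inner_eq_zero (x - v) hij _ (mul_mem (mul_mem (hmem v) hT) (hmem v))
    · rw [hsymm, (hcomm v T hT).eq, mul_assoc, horth v hv v' hv' hvv]
      simp

end IsOrthogonalDecomposition

end Decomposition

section Walk

variable {E : Type} [NormedAddCommGroup E] [InnerProductSpace ℂ E] [CompleteSpace E]
  {X : Type} [AddGroup X] {S : Finset X} {C : ℕ → X → E →L[ℂ] E}
  {W : ℕ → X → E} {ω : ℕ → X → E →L[ℂ] E}

theorem exists_isOrthogonalDecomposition (hsa : ∀ n v, IsSelfAdjoint (C n v))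
    (hcomm : ∀ m n v w, Commute (C m v) (C n w))
    (horth : ∀ n, ∀ v ∈ S, ∀ w ∈ S, v ≠ w → C n v * C n w = 0)
    (hW : ∀ n x, W (n + 1) x = ∑ v ∈ S, C n v (W n (x - v)))
    (hω : ∀ n x, ω (n + 1) x = ∑ v ∈ S, C n v * ω n (x - v) * C n v)
    (hω0 : ∀ x, ω 0 x = dyad (W 0 x) (W 0 x)) (n : ℕ) :
    ∃ (ι : Type) (_ : Fintype ι) (ξ : ι → X → E),
      IsOrthogonalDecomposition (Algebra.adjoin ℂ (Set.range C.uncurry)) (W n) (ω n) ξ := by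
  induction n with
  | zero => exact ⟨Unit, inferInstance, _, funext hω0 ▸ isOrthogonalDecomposition_dyad (W 0)⟩
  | succ n ih =>
    obtain ⟨ι, _, ξ, h⟩ := ih
    have hmem (v : X) : C n v ∈ Algebra.adjoin ℂ (Set.range C.uncurry) :=
      Algebra.subset_adjoin ⟨(n, v), rfl⟩
    have hcomm' (v : X) (T) (hT : T ∈ Algebra.adjoin ℂ (Set.range C.uncurry)) :
        Commute (C n v) T :=
      Algebra.commute_of_mem_adjoin_of_forall_mem_commute hT <| by
        rintro _ ⟨⟨m, w⟩, rfl⟩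
        exact hcomm n m v w
    rw [funext (hW n), funext (hω n)]
    exact ⟨_, inferInstance, _, h.step (hsa n) hmem hcomm' (horth n)⟩

end Walk

section QBN

lemma coe_default_hilbertBasis : ⇑(default : HilbertBasis (Finset ℕ) ℂ ℋ) = Z :=
  funext fun σ => by rw [← HilbertBasis.repr_symm_single]; rfl

lemma ext_Z {T T' : ℋ →L[ℂ] ℋ} (h : ∀ σ, T (Z σ) = T' (Z σ)) : T = T' := by
  have hdense := (default : HilbertBasis (Finset ℕ) ℂ ℋ).dense_span
  rw [coe_default_hilbertBasis] at hdense
  exact ContinuousLinearMap.ext_on (Submodule.dense_iff_topologicalClosure_eq_top.2 hdense)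
    (Set.forall_mem_range.2 h)

variable {a : ℕ → ℋ →L[ℂ] ℋ}

lemma QBN.adjoint_add_apply_Z (ha : QBN a) (n : ℕ) (σ : Finset ℕ) :
    (adjoint (a n) + a n) (Z σ) = Z (σ ∆ {n}) := by
  rw [add_apply, ha.1, ha.2]
  by_cases h : n ∈ σ <;> simp only [h, if_true, if_false, zero_add, add_zero] <;> congr 1 <;>
    ext k <;> by_cases hk : k = n <;> simp [h, hk, Finset.mem_symmDiff]

lemma QBN.adjoint_add_mul_self (ha : QBN a) (n : ℕ) :
    (adjoint (a n) + a n) * (adjoint (a n) + a n) = 1 :=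
  ext_Z fun σ => by
    rw [mul_apply_eq_comp, ha.adjoint_add_apply_Z, ha.adjoint_add_apply_Z,
      symmDiff_symmDiff_cancel_right, one_apply_eq_self]

lemma QBN.commute_adjoint_add (ha : QBN a) (m n : ℕ) :
    Commute (adjoint (a m) + a m) (adjoint (a n) + a n) :=
  ext_Z fun σ => by
    simp only [mul_apply_eq_comp, ha.adjoint_add_apply_Z, symmDiff_right_comm]

lemma Bop_mem_adjoin (a : ℕ → ℋ →L[ℂ] ℋ) (n : ℕ) (e : ℤ) :
    Bop a n e ∈ Algebra.adjoin ℂ {adjoint (a n) + a n} := by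
  have hS := Algebra.self_mem_adjoin_singleton ℂ (adjoint (a n) + a n)
  unfold Bop Lop Rop
  split_ifs
  · exact Subalgebra.smul_mem _ (sub_mem hS (one_mem _)) _
  · exact Subalgebra.smul_mem _ (add_mem hS (one_mem _)) _

lemma isSelfAdjoint_Bop (a : ℕ → ℋ →L[ℂ] ℋ) (n : ℕ) (e : ℤ) : IsSelfAdjoint (Bop a n e) := by
  have hS : IsSelfAdjoint (adjoint (a n) + a n) := by
    simpa only [star_eq_adjoint] using IsSelfAdjoint.star_add_self (a n)
  have h2 : IsSelfAdjoint (2⁻¹ : ℂ) := (IsSelfAdjoint.ofNat 2).inv₀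
  unfold Bop Lop Rop
  split_ifs
  · exact h2.smul (hS.sub (.one _))
  · exact h2.smul (hS.add (.one _))

lemma QBN.commute_Bop (ha : QBN a) (m n : ℕ) (e e' : ℤ) : Commute (Bop a m e) (Bop a n e') :=
  Algebra.commute_of_mem_adjoin_singleton_of_commute (Bop_mem_adjoin a n e')
    (Algebra.commute_of_mem_adjoin_singleton_of_commute (Bop_mem_adjoin a m e)
      (ha.commute_adjoint_add n m)).symm

lemma QBN.Lop_mul_Rop (ha : QBN a) (n : ℕ) : Lop a n * Rop a n = 0 := by
  have hS := ha.adjoint_add_mul_self n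
  rw [Lop, Rop, smul_mul_smul_comm]
  generalize adjoint (a n) + a n = S at hS ⊢
  rw [show (S - 1) * (S + 1) = S * S - 1 by noncomm_ring, hS, sub_self, smul_zero]

lemma QBN.Rop_mul_Lop (ha : QBN a) (n : ℕ) : Rop a n * Lop a n = 0 := by
  have hS := ha.adjoint_add_mul_self n
  rw [Lop, Rop, smul_mul_smul_comm]
  generalize adjoint (a n) + a n = S at hS ⊢
  rw [show (S + 1) * (S - 1) = S * S - 1 by noncomm_ring, hS, sub_self, smul_zero]

lemma QBN.Bop_mul_Bop_of_ne (ha : QBN a) (n : ℕ) {e e' : ℤ} (he : e ∈ Lam) (he' : e' ∈ Lam)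
    (hne : e ≠ e') : Bop a n e * Bop a n e' = 0 := by
  simp only [Lam, Finset.mem_insert, Finset.mem_singleton] at he he'
  rcases he with rfl | rfl <;> rcases he' with rfl | rfl <;>
    simp_all [Bop, ha.Lop_mul_Rop, ha.Rop_mul_Lop]

end QBN

namespace IsTensorD

variable {Hs : Type} [NormedAddCommGroup Hs] [InnerProductSpace ℂ Hs]
  {d : ℕ} {Hd : Type} [NormedAddCommGroup Hd] [InnerProductSpace ℂ Hd]
  {tpv : MultilinearMap ℂ (fun _ : Fin d => Hs) Hd} {tp : (Fin d → Hs →L[ℂ] Hs) → (Hd →L[ℂ] Hd)}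

lemma dense_span (htp : IsTensorD tpv tp) :
    Dense (Submodule.span ℂ (Set.range fun u => tpv u) : Set Hd) :=
  Submodule.dense_iff_topologicalClosure_eq_top.2 htp.2.1

lemma ext (htp : IsTensorD tpv tp) {T T' : Hd →L[ℂ] Hd} (h : ∀ u, T (tpv u) = T' (tpv u)) :
    T = T' :=
  ContinuousLinearMap.ext_on htp.dense_span (Set.forall_mem_range.2 h)

lemma ext_inner (htp : IsTensorD tpv tp) {z z' : Hd} (h : ∀ u, ⟪z, tpv u⟫ = ⟪z', tpv u⟫) :
    z = z' :=
  htp.dense_span.eq_of_inner_left ℂ fun _ hv =>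
    LinearMap.eqOn_span' (f := innerₛₗ ℂ z) (g := innerₛₗ ℂ z') (Set.forall_mem_range.2 h) hv

lemma map_mul (htp : IsTensorD tpv tp) (A B : Fin d → Hs →L[ℂ] Hs) :
    tp (A * B) = tp A * tp B :=
  htp.ext fun u => by simp only [mul_apply_eq_comp, htp.2.2, Pi.mul_apply]

lemma map_eq_zero (htp : IsTensorD tpv tp) {A : Fin d → Hs →L[ℂ] Hs} (j : Fin d) (hj : A j = 0) :
    tp A = 0 :=
  htp.ext fun u => by
    rw [htp.2.2, zero_apply]
    exact tpv.map_coord_zero j (by rw [hj, zero_apply])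

lemma map_star [CompleteSpace Hs] [CompleteSpace Hd] (htp : IsTensorD tpv tp)
    (A : Fin d → Hs →L[ℂ] Hs) : tp (star A) = star (tp A) :=
  htp.ext fun v => htp.ext_inner fun u => by
    simp only [star_eq_adjoint, adjoint_inner_left, htp.2.2, htp.1, Pi.star_apply]

end IsTensorD

section Coins

variable {a : ℕ → ℋ →L[ℂ] ℋ} {d : ℕ} {Hd : Type} [NormedAddCommGroup Hd]
  [InnerProductSpace ℂ Hd] [CompleteSpace Hd]
  {tpv : MultilinearMap ℂ (fun _ : Fin d => ℋ) Hd} {tp : (Fin d → ℋ →L[ℂ] ℋ) → (Hd →L[ℂ] Hd)}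
  {K : Hd ≃ₗᵢ[ℂ] ℋ}

lemma Cop_eq_conjStarAlgEquiv (n : ℕ) (v : Fin d → ℤ) :
    Cop a tp K n v = K.conjStarAlgEquiv (tp fun j => Bop a n (v j)) := rfl

lemma IsTensorD.isSelfAdjoint_Cop (htp : IsTensorD tpv tp) (n : ℕ) (v : Fin d → ℤ) :
    IsSelfAdjoint (Cop a tp K n v) := by
  rw [Cop_eq_conjStarAlgEquiv]
  refine IsSelfAdjoint.map ?_ _
  rw [IsSelfAdjoint, ← htp.map_star]
  exact congrArg tp (Pi.isSelfAdjoint.2 fun j => isSelfAdjoint_Bop a n (v j))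

lemma QBN.commute_Cop (ha : QBN a) (htp : IsTensorD tpv tp) (m n : ℕ) (v w : Fin d → ℤ) :
    Commute (Cop a tp K m v) (Cop a tp K n w) := by
  simp only [Cop_eq_conjStarAlgEquiv]
  refine Commute.map ?_ _
  rw [Commute, SemiconjBy, ← htp.map_mul, ← htp.map_mul]
  exact congrArg tp (funext fun j => (ha.commute_Bop m n (v j) (w j)).eq)

lemma QBN.Cop_mul_Cop_of_ne (ha : QBN a) (htp : IsTensorD tpv tp) (n : ℕ) {v w : Fin d → ℤ}
    (hv : v ∈ LamD d) (hw : w ∈ LamD d) (hne : v ≠ w) : Cop a tp K n v * Cop a tp K n w = 0 := by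
  obtain ⟨j, hj⟩ := Function.ne_iff.1 hne
  rw [Cop_eq_conjStarAlgEquiv, Cop_eq_conjStarAlgEquiv, ← map_mul, ← htp.map_mul,
    htp.map_eq_zero j (ha.Bop_mul_Bop_of_ne n (Fintype.mem_piFinset.1 hv j)
      (Fintype.mem_piFinset.1 hw j) hj), map_zero]

end Coins

theorem stmt19_general (a : ℕ → ℋ →L[ℂ] ℋ) (ha : QBN a)
    (d : ℕ)
    (Hd : Type) [NormedAddCommGroup Hd] [InnerProductSpace ℂ Hd] [CompleteSpace Hd]
    (tpv : MultilinearMap ℂ (fun _ : Fin d => ℋ) Hd)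
    (tp : (Fin d → ℋ →L[ℂ] ℋ) → (Hd →L[ℂ] Hd))
    (htp : IsTensorD tpv tp)
    (K : Hd ≃ₗᵢ[ℂ] ℋ)
    (W : ℕ → l2ZH d)
    (hWev : ∀ (n : ℕ) (x : Fin d → ℤ),
      (W (n + 1)) x = ∑ v ∈ LamD d, Cop a tp K n v ((W n) (x - v)))
    (ω : ℕ → (Fin d → ℤ) → ℋ →L[ℂ] ℋ)
    (hev : ∀ n : ℕ, ω (n + 1) = JmapD a tp K n (ω n))
    (hinit : ∀ x : Fin d → ℤ, ω 0 x = dyad ((W 0) x) ((W 0) x)) :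
    ∀ (n : ℕ) (x : Fin d → ℤ), trH (ω n x) = ‖(W n) x‖ ^ 2 := by
  intro n x
  obtain ⟨ι, _, ξ, h⟩ := exists_isOrthogonalDecomposition (S := LamD d) (C := Cop a tp K)
    (W := fun n x => W n x) htp.isSelfAdjoint_Cop (ha.commute_Cop htp)
    (fun n _ hv _ hw => ha.Cop_mul_Cop_of_ne htp n hv hw) hWev (fun n => congrFun (hev n)) hinit n
  have := h.trB_eq (default : HilbertBasis (Finset ℕ) ℂ ℋ) x
  rwa [coe_default_hilbertBasis] at this

/-- If the open QBN walk starts from `ω⁽⁰⁾(x) = |W_0(x)⟩⟨W_0(x)|`, where `W_0` is the (unit)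
initial state of the unitary `d`-dimensional QBN walk `W_{n+1}(x) = ∑_ε C_n^{(ε)} W_n(x-ε)`,
then at every time `n` and site `x` one has `Tr[ω⁽ⁿ⁾(x)] = ‖W_n(x)‖²`. -/
theorem stmt19 (a : ℕ → ℋ →L[ℂ] ℋ) (ha : QBN a)
    (d : ℕ) (hd : 2 ≤ d)
    (Hd : Type) [NormedAddCommGroup Hd] [InnerProductSpace ℂ Hd] [CompleteSpace Hd]
    (tpv : MultilinearMap ℂ (fun _ : Fin d => ℋ) Hd)
    (tp : (Fin d → ℋ →L[ℂ] ℋ) → (Hd →L[ℂ] Hd))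
    (htp : IsTensorD tpv tp)
    (K : Hd ≃ₗᵢ[ℂ] ℋ)
    (W : ℕ → l2ZH d) (hW0 : ‖W 0‖ = 1)
    (hWev : ∀ (n : ℕ) (x : Fin d → ℤ),
      (W (n + 1)) x = ∑ v ∈ LamD d, Cop a tp K n v ((W n) (x - v)))
    (ω : ℕ → (Fin d → ℤ) → ℋ →L[ℂ] ℋ)
    (hev : ∀ n : ℕ, ω (n + 1) = JmapD a tp K n (ω n))
    (hinit : ∀ x : Fin d → ℤ, ω 0 x = dyad ((W 0) x) ((W 0) x)) :
    ∀ (n : ℕ) (x : Fin d → ℤ), trH (ω n x) = ‖(W n) x‖ ^ 2 :=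
  stmt19_general a ha d Hd tpv tp htp K W hWev ω hev hinit
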